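/- For the energy harvesting two-way channel with infinite batteries and α_1, α_2 ∈ [0,1]: for every feasible policy (p_{k,i}, δ_{k,i}) there exist transfers δ'_{k,i} ≥ 0 such that (p_{k,i}, δ'_{k,i}) is a feasible policy and is procrastinating, i.e., p_{k,i} − α_j δ'_{j,i} ≥ 0 for k = 1,2, j ≠ k, and all i. In particular, every sequence of transmit powers realizable by some feasible policy is realizable by a feasible procrastinating policy. -/
import Mathlib

/-! Auxiliary machinery: a "just-in-time" (least) transfer policy.

We work with cumulative transfer amounts `z` (total transferred by node 2 so far)
and `w` (total transferred by node 1 so far).  Feasibility of node 1 after slot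
`i` reads `0 ≤ S1 + a2*z - w` and of node 2 reads `0 ≤ S2 + a1*w - z`, where
`S1, S2` are the cumulative harvested-minus-spent energies.  At each slot we
increase `z` or `w` minimally so that both constraints hold. -/

noncomputable def ehStep (a1 a2 t1 t2 z w : ℝ) : ℝ × ℝ :=
  if t1 + a2 * z - w < 0 then ((w - t1) / a2, w)
  else if t2 + a1 * w - z < 0 then (z, (z - t2) / a1)
  else (z, w)

noncomputable def ehState (a1 a2 : ℝ) (g1 g2 : ℕ → ℝ) : ℕ → ℝ × ℝ
  | 0 => (0, 0)
  | (i+1) =>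
      ehStep a1 a2 (∑ n ∈ Finset.range (i+1), g1 n) (∑ n ∈ Finset.range (i+1), g2 n)
        (ehState a1 a2 g1 g2 i).1 (ehState a1 a2 g1 g2 i).2

lemma eh_sum_split (a : ℝ) (f u v : ℕ → ℝ) (m : ℕ) :
    ∑ n ∈ Finset.range m, (f n + a * u n - v n) =
      (∑ n ∈ Finset.range m, f n) + a * (∑ n ∈ Finset.range m, u n)
        - (∑ n ∈ Finset.range m, v n) := by
  rw [Finset.mul_sum, ← Finset.sum_add_distrib, ← Finset.sum_sub_distrib]

/-- Core exchange lemma: if the current state violates constraint 1 while a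
(componentwise larger) witness satisfies both constraints, then `a2 > 0` and the
minimal repair `z := (w0 - t1)/a2` satisfies constraint 2 and stays below the
witness. -/
lemma eh_core (a1 a2 t1 t2 z0 w0 Zw Ww : ℝ)
    (ha1 : 0 ≤ a1) (ha2 : 0 ≤ a2) (ha12 : a1 * a2 ≤ 1)
    (hz : z0 ≤ Zw) (hw : w0 ≤ Ww)
    (hC1 : 0 ≤ t1 + a2 * Zw - Ww) (hC2 : 0 ≤ t2 + a1 * Ww - Zw)
    (hc1 : t1 + a2 * z0 - w0 < 0) :
    0 < a2 ∧ (w0 - t1) / a2 ≤ t2 + a1 * w0 ∧ (w0 - t1) / a2 ≤ Zw := by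
  have ha2' : 0 < a2 := by
    rcases ha2.lt_or_eq with h | h
    · exact h
    · exfalso
      have h' : a2 = 0 := h.symm
      subst h'
      simp only [zero_mul] at hC1 hc1
      linarith
  refine ⟨ha2', ?_, ?_⟩
  · rcases le_or_gt z0 (Zw - a1 * (Ww - w0)) with h | h
    · have h1 : 0 ≤ (1 - a1 * a2) * (Ww - w0) :=
        mul_nonneg (by linarith) (by linarith)
      have h2 : 0 ≤ t1 + a2 * (Zw - a1 * (Ww - w0)) - w0 := by nlinarith
      have h3 : Zw - a1 * (Ww - w0) ≤ t2 + a1 * w0 := by nlinarith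
      rw [div_le_iff₀ ha2']
      nlinarith
    · exfalso
      have ha1' : 0 < a1 := by
        rcases ha1.lt_or_eq with h' | h'
        · exact h'
        · exfalso
          have h'' : a1 = 0 := h'.symm
          subst h''
          simp only [zero_mul] at h
          linarith
      have hδ1 : a1 * ((Zw - z0) / a1) = Zw - z0 := by
        field_simp
      set δ := (Zw - z0) / a1 with hδ
      have hδ0 : 0 ≤ δ := div_nonneg (by linarith) ha1'.le
      have hδ2 : δ < Ww - w0 := by
        have hlt : a1 * δ < a1 * (Ww - w0) := by rw [hδ1]; linarith
        exact (mul_lt_mul_iff_right₀ ha1').mp hlt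
      have h4 : 0 ≤ (1 - a1 * a2) * δ := mul_nonneg (by linarith) hδ0
      have e : a2 * z0 = a2 * Zw - a2 * (a1 * δ) := by rw [hδ1]; ring
      have h5 : 0 ≤ t1 + a2 * z0 - (Ww - δ) := by nlinarith
      linarith
  · rw [div_le_iff₀ ha2']
    nlinarith

/-- One step of the just-in-time policy: all the invariants are preserved, the
cumulative transfers increase, and the increments satisfy the procrastinating
caps. -/
lemma eh_step_main (a1 a2 t1 t2 t1' t2' P1 P2 e1 e2 z0 w0 Zw Ww : ℝ)
    (ha1 : 0 ≤ a1) (ha2 : 0 ≤ a2) (ha12 : a1 * a2 ≤ 1)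
    (hE1 : 0 ≤ e1) (hE2 : 0 ≤ e2) (hP1 : 0 ≤ P1) (hP2 : 0 ≤ P2)
    (ht1 : t1' = t1 + (e1 - P1)) (ht2 : t2' = t2 + (e2 - P2))
    (hz : z0 ≤ Zw) (hw : w0 ≤ Ww)
    (hI1 : 0 ≤ t1 + a2 * z0 - w0) (hI2 : 0 ≤ t2 + a1 * w0 - z0)
    (hW1 : 0 ≤ t1' + a2 * Zw - Ww) (hW2 : 0 ≤ t2' + a1 * Ww - Zw) :
    z0 ≤ (ehStep a1 a2 t1' t2' z0 w0).1 ∧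
    w0 ≤ (ehStep a1 a2 t1' t2' z0 w0).2 ∧
    (ehStep a1 a2 t1' t2' z0 w0).1 ≤ Zw ∧
    (ehStep a1 a2 t1' t2' z0 w0).2 ≤ Ww ∧
    0 ≤ t1' + a2 * (ehStep a1 a2 t1' t2' z0 w0).1 - (ehStep a1 a2 t1' t2' z0 w0).2 ∧
    0 ≤ t2' + a1 * (ehStep a1 a2 t1' t2' z0 w0).2 - (ehStep a1 a2 t1' t2' z0 w0).1 ∧
    a2 * ((ehStep a1 a2 t1' t2' z0 w0).1 - z0) ≤ P1 ∧
    a1 * ((ehStep a1 a2 t1' t2' z0 w0).2 - w0) ≤ P2 := by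
  unfold ehStep
  split_ifs with hc1 hc2
  · -- constraint 1 violated: node 2 transfers just enough
    obtain ⟨ha2', hB, hC⟩ :=
      eh_core a1 a2 t1' t2' z0 w0 Zw Ww ha1 ha2 ha12 hz hw hW1 hW2 hc1
    have hfs : a2 * ((w0 - t1') / a2) = w0 - t1' := by field_simp
    simp only
    refine ⟨?_, le_refl _, hC, hw, ?_, ?_, ?_, ?_⟩
    · rw [le_div_iff₀ ha2']; nlinarith
    · rw [hfs]; linarith
    · linarith
    · have : a2 * ((w0 - t1') / a2 - z0) = (w0 - t1') - a2 * z0 := by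
        rw [mul_sub, hfs]
      rw [this]; linarith
    · simp only [sub_self, mul_zero]; exact hP2
  · -- constraint 2 violated: node 1 transfers just enough
    obtain ⟨ha1', hB, hC⟩ :=
      eh_core a2 a1 t2' t1' w0 z0 Ww Zw ha2 ha1 (by linarith [ha12, mul_comm a1 a2]) hw hz hW2 hW1 hc2
    have hfs : a1 * ((z0 - t2') / a1) = z0 - t2' := by field_simp
    simp only
    refine ⟨le_refl _, ?_, hz, hC, ?_, ?_, ?_, ?_⟩
    · rw [le_div_iff₀ ha1']; nlinarith
    · linarith
    · rw [hfs]; linarith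
    · simp only [sub_self, mul_zero]; exact hP1
    · have : a1 * ((z0 - t2') / a1 - w0) = (z0 - t2') - a1 * w0 := by
        rw [mul_sub, hfs]
      rw [this]; linarith
  · -- both constraints already hold
    push_neg at hc1 hc2
    simp only
    refine ⟨le_refl _, le_refl _, hz, hw, hc1, hc2, ?_, ?_⟩
    · simp only [sub_self, mul_zero]; exact hP1
    · simp only [sub_self, mul_zero]; exact hP2

/-- Every feasible transmit-power sequence of the energy harvesting
two-way channel with infinite batteries is realizable by a feasible
procrastinating policy. -/
theorem stmt_1
    (N : ℕ) (E1 E2 p1 p2 d1 d2 : ℕ → ℝ)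
    (h1 h2 s1 s2 a1 a2 : ℝ)
    (hh1 : 0 < h1) (hh2 : 0 < h2) (hs1 : 0 < s1) (hs2 : 0 < s2)
    (ha1 : a1 ∈ Set.Icc (0:ℝ) 1) (ha2 : a2 ∈ Set.Icc (0:ℝ) 1)
    (hE : ∀ i < N, 0 ≤ E1 i ∧ 0 ≤ E2 i)
    (hp : ∀ i < N, 0 ≤ p1 i ∧ 0 ≤ p2 i)
    (hd : ∀ i < N, 0 ≤ d1 i ∧ 0 ≤ d2 i)
    (hfeas : ∀ i < N,
      0 ≤ ∑ n ∈ Finset.range (i+1), (E1 n - p1 n + a2 * d2 n - d1 n) ∧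
      0 ≤ ∑ n ∈ Finset.range (i+1), (E2 n - p2 n + a1 * d1 n - d2 n)) :
    ∃ d1' d2' : ℕ → ℝ,
      -- the new transfers are nonnegative (a valid policy with the same powers)
      (∀ i < N, 0 ≤ d1' i ∧ 0 ≤ d2' i) ∧
      -- the new policy is feasible
      (∀ i < N,
        0 ≤ ∑ n ∈ Finset.range (i+1), (E1 n - p1 n + a2 * d2' n - d1' n) ∧
        0 ≤ ∑ n ∈ Finset.range (i+1), (E2 n - p2 n + a1 * d1' n - d2' n)) ∧
      -- the new policy is procrastinating
      (∀ i < N, 0 ≤ p1 i - a2 * d2' i ∧ 0 ≤ p2 i - a1 * d1' i) := by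
  obtain ⟨ha1l, ha1u⟩ := ha1
  obtain ⟨ha2l, ha2u⟩ := ha2
  have ha12 : a1 * a2 ≤ 1 := by nlinarith
  set g1 : ℕ → ℝ := fun n => E1 n - p1 n with hg1
  set g2 : ℕ → ℝ := fun n => E2 n - p2 n with hg2
  set F : ℕ → ℝ × ℝ := ehState a1 a2 g1 g2 with hF
  -- rewrite the feasibility of the original policy in split form
  have hfeas' : ∀ i < N,
      0 ≤ (∑ n ∈ Finset.range (i+1), g1 n)
            + a2 * (∑ n ∈ Finset.range (i+1), d2 n) - (∑ n ∈ Finset.range (i+1), d1 n) ∧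
      0 ≤ (∑ n ∈ Finset.range (i+1), g2 n)
            + a1 * (∑ n ∈ Finset.range (i+1), d1 n) - (∑ n ∈ Finset.range (i+1), d2 n) := by
    intro i hi
    obtain ⟨w1, w2⟩ := hfeas i hi
    rw [eh_sum_split a2 g1 d2 d1 (i+1)] at w1
    rw [eh_sum_split a1 g2 d1 d2 (i+1)] at w2
    exact ⟨w1, w2⟩
  -- the invariant
  have key : ∀ i, i ≤ N →
      (F i).1 ≤ (∑ n ∈ Finset.range i, d2 n) ∧
      (F i).2 ≤ (∑ n ∈ Finset.range i, d1 n) ∧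
      0 ≤ (∑ n ∈ Finset.range i, g1 n) + a2 * (F i).1 - (F i).2 ∧
      0 ≤ (∑ n ∈ Finset.range i, g2 n) + a1 * (F i).2 - (F i).1 := by
    intro i
    induction i with
    | zero =>
        intro _
        simp [hF, ehState]
    | succ i ih =>
        intro hi
        have hiN : i < N := hi
        obtain ⟨k1, k2, k3, k4⟩ := ih (Nat.le_of_succ_le hi)
        obtain ⟨w1, w2⟩ := hfeas' i hiN
        obtain ⟨hE1, hE2⟩ := hE i hiN
        obtain ⟨hP1, hP2⟩ := hp i hiN
        obtain ⟨hd1, hd2⟩ := hd i hiN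
        have hz : (F i).1 ≤ ∑ n ∈ Finset.range (i+1), d2 n := by
          rw [Finset.sum_range_succ]; linarith
        have hw : (F i).2 ≤ ∑ n ∈ Finset.range (i+1), d1 n := by
          rw [Finset.sum_range_succ]; linarith
        have ht1 : (∑ n ∈ Finset.range (i+1), g1 n)
            = (∑ n ∈ Finset.range i, g1 n) + (E1 i - p1 i) := by
          rw [Finset.sum_range_succ]
        have ht2 : (∑ n ∈ Finset.range (i+1), g2 n)
            = (∑ n ∈ Finset.range i, g2 n) + (E2 i - p2 i) := by
          rw [Finset.sum_range_succ]
        obtain ⟨m1, m2, m3, m4, m5, m6, m7, m8⟩ :=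
          eh_step_main a1 a2 (∑ n ∈ Finset.range i, g1 n) (∑ n ∈ Finset.range i, g2 n)
            (∑ n ∈ Finset.range (i+1), g1 n) (∑ n ∈ Finset.range (i+1), g2 n)
            (p1 i) (p2 i) (E1 i) (E2 i)
            (F i).1 (F i).2
            (∑ n ∈ Finset.range (i+1), d2 n) (∑ n ∈ Finset.range (i+1), d1 n)
            ha1l ha2l ha12 hE1 hE2 hP1 hP2 ht1 ht2 hz hw k3 k4 w1 w2
        have hFsucc : F (i+1) = ehStep a1 a2 (∑ n ∈ Finset.range (i+1), g1 n)
            (∑ n ∈ Finset.range (i+1), g2 n) (F i).1 (F i).2 := rfl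
        rw [hFsucc]
        exact ⟨m3, m4, m5, m6⟩
  -- per-slot increment facts
  have step : ∀ i < N,
      (F i).1 ≤ (F (i+1)).1 ∧ (F i).2 ≤ (F (i+1)).2 ∧
      a2 * ((F (i+1)).1 - (F i).1) ≤ p1 i ∧ a1 * ((F (i+1)).2 - (F i).2) ≤ p2 i := by
    intro i hiN
    obtain ⟨k1, k2, k3, k4⟩ := key i (Nat.le_of_lt hiN)
    obtain ⟨w1, w2⟩ := hfeas' i hiN
    obtain ⟨hE1, hE2⟩ := hE i hiN
    obtain ⟨hP1, hP2⟩ := hp i hiN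
    obtain ⟨hd1, hd2⟩ := hd i hiN
    have hz : (F i).1 ≤ ∑ n ∈ Finset.range (i+1), d2 n := by
      rw [Finset.sum_range_succ]; linarith
    have hw : (F i).2 ≤ ∑ n ∈ Finset.range (i+1), d1 n := by
      rw [Finset.sum_range_succ]; linarith
    have ht1 : (∑ n ∈ Finset.range (i+1), g1 n)
        = (∑ n ∈ Finset.range i, g1 n) + (E1 i - p1 i) := by
      rw [Finset.sum_range_succ]
    have ht2 : (∑ n ∈ Finset.range (i+1), g2 n)
        = (∑ n ∈ Finset.range i, g2 n) + (E2 i - p2 i) := by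
      rw [Finset.sum_range_succ]
    obtain ⟨m1, m2, m3, m4, m5, m6, m7, m8⟩ :=
      eh_step_main a1 a2 (∑ n ∈ Finset.range i, g1 n) (∑ n ∈ Finset.range i, g2 n)
        (∑ n ∈ Finset.range (i+1), g1 n) (∑ n ∈ Finset.range (i+1), g2 n)
        (p1 i) (p2 i) (E1 i) (E2 i)
        (F i).1 (F i).2
        (∑ n ∈ Finset.range (i+1), d2 n) (∑ n ∈ Finset.range (i+1), d1 n)
        ha1l ha2l ha12 hE1 hE2 hP1 hP2 ht1 ht2 hz hw k3 k4 w1 w2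
    have hFsucc : F (i+1) = ehStep a1 a2 (∑ n ∈ Finset.range (i+1), g1 n)
        (∑ n ∈ Finset.range (i+1), g2 n) (F i).1 (F i).2 := rfl
    rw [hFsucc]
    exact ⟨m1, m2, m7, m8⟩
  -- the new transfers
  refine ⟨fun i => (F (i+1)).2 - (F i).2, fun i => (F (i+1)).1 - (F i).1, ?_, ?_, ?_⟩
  · intro i hiN
    obtain ⟨m1, m2, _, _⟩ := step i hiN
    exact ⟨sub_nonneg.mpr m2, sub_nonneg.mpr m1⟩
  · intro i hiN
    have hsum2 : (∑ n ∈ Finset.range (i+1), ((F (n+1)).1 - (F n).1)) = (F (i+1)).1 := by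
      rw [Finset.sum_range_sub (fun n => (F n).1)]
      simp [hF, ehState]
    have hsum1 : (∑ n ∈ Finset.range (i+1), ((F (n+1)).2 - (F n).2)) = (F (i+1)).2 := by
      rw [Finset.sum_range_sub (fun n => (F n).2)]
      simp [hF, ehState]
    obtain ⟨k1, k2, k3, k4⟩ := key (i+1) (Nat.succ_le_of_lt hiN)
    constructor
    · rw [eh_sum_split a2 g1 (fun n => (F (n+1)).1 - (F n).1) (fun n => (F (n+1)).2 - (F n).2) (i+1),
        hsum1, hsum2]
      exact k3
    · rw [eh_sum_split a1 g2 (fun n => (F (n+1)).2 - (F n).2) (fun n => (F (n+1)).1 - (F n).1) (i+1),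
        hsum2, hsum1]
      exact k4
  · intro i hiN
    obtain ⟨_, _, m7, m8⟩ := step i hiN
    exact ⟨sub_nonneg.mpr m7, sub_nonneg.mpr m8⟩
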